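/- arXiv:2311.10540 — 6 statements merged into one kernel-verified Lean document; each statement's English description precedes it below -/
import Mathlib

section
/- Let U be a finite set, and for each e ∈ U let c̲(e) ≤ c̄(e) be integers. For a fixed subset S ⊆ U define the canonical scenario c_S : U → ℤ by c_S(e) = c̄(e) if e ∈ S and c_S(e) = c̲(e) otherwise. Then for every function c : U → ℝ with c̲(e) ≤ c(e) ≤ c̄(e) for all e ∈ U, and for every subset S' ⊆ U, it holds that c(S) − c(S') ≤ c_S(S) − c_S(S'), where c(A) := Σ_{e∈A} c(e). -/
/-! Only the elements of the symmetric difference of `S` and `S'` contribute to the regret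
`c(S) − c(S')`; it grows when `c` grows on `S \ S'` and shrinks on `S' \ S`, and `c_S` is
extremal in both directions there. -/

theorem Finset.sum_sub_sum_le_sum_sub_sum {ι M : Type*} [DecidableEq ι] [AddCommGroup M]
    [PartialOrder M] [IsOrderedAddMonoid M] {s t : Finset ι} {f g : ι → M}
    (hst : ∀ i ∈ s \ t, f i ≤ g i) (hts : ∀ i ∈ t \ s, g i ≤ f i) :
    (∑ i ∈ s, f i) - ∑ i ∈ t, f i ≤ (∑ i ∈ s, g i) - ∑ i ∈ t, g i := by
  rw [← sum_sdiff_sub_sum_sdiff (s₂ := s) (f := f),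
    ← sum_sdiff_sub_sum_sdiff (s₂ := s) (f := g)]
  exact sub_le_sub (sum_le_sum hst) (sum_le_sum hts)

theorem canonical_scenario_maximizes_regret_general {U : Type*} [DecidableEq U]
    (clo chi : U → ℤ)
    (S : Finset U) (c : U → ℝ)
    (hc : ∀ e, (clo e : ℝ) ≤ c e ∧ c e ≤ (chi e : ℝ))
    (S' : Finset U) :
    (∑ e ∈ S, c e) - (∑ e ∈ S', c e) ≤
      (∑ e ∈ S, ((if e ∈ S then chi e else clo e : ℤ) : ℝ)) -
        (∑ e ∈ S', ((if e ∈ S then chi e else clo e : ℤ) : ℝ)) := by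
  refine Finset.sum_sub_sum_le_sum_sub_sum (fun e he => ?_) (fun e he => ?_)
  · rw [if_pos (Finset.mem_sdiff.mp he).1]
    exact (hc e).2
  · rw [if_neg (Finset.mem_sdiff.mp he).2]
    exact (hc e).1

/-- The canonical scenario `c_S` pointwise maximizes the regret `c(S) − c(S')`
over the interval uncertainty set, simultaneously for all `S'`. -/
theorem canonical_scenario_maximizes_regret {U : Type*} [Fintype U] [DecidableEq U]
    (clo chi : U → ℤ) (hle : ∀ e, clo e ≤ chi e)
    (S : Finset U) (c : U → ℝ)
    (hc : ∀ e, (clo e : ℝ) ≤ c e ∧ c e ≤ (chi e : ℝ))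
    (S' : Finset U) :
    (∑ e ∈ S, c e) - (∑ e ∈ S', c e) ≤
      (∑ e ∈ S, ((if e ∈ S then chi e else clo e : ℤ) : ℝ)) -
        (∑ e ∈ S', ((if e ∈ S then chi e else clo e : ℤ) : ℝ)) :=
  canonical_scenario_maximizes_regret_general clo chi S c hc S'
end

section
/- Let U be a finite set, F ⊆ 𝒫(U) a nonempty finite family of subsets, integers c̲(e) ≤ c̄(e) for all e ∈ U, and let C_I be the set of all c : U → ℝ with c̲(e) ≤ c(e) ≤ c̄(e) for all e. Let t ∈ ℤ. Then min_{S∈F} max_{c∈C_I} ( c(S) − min_{S'∈F} c(S') ) ≤ t holds if and only if there exists S ∈ F such that for all S' ∈ F one has c_S(S) − c_S(S') ≤ t, where c_S(e) = c̄(e) for e ∈ S and c_S(e) = c̲(e) for e ∉ S. -/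
/-!
For a fixed choice `S`, the adversary maximises the regret `c(S) - c(S')` against each
competitor `S'` by charging the upper bound on `S` and the lower bound elsewhere: only
the elements of `S \ S'` and `S' \ S` contribute to the difference. Hence the canonical
scenario `c_S` attains the supremum defining the maximum regret of `S`.
-/

namespace Finset

lemma sub_min'_le_iff {α : Type*} [AddCommGroup α] [LinearOrder α] [IsOrderedAddMonoid α]
    (s : Finset α) (H : s.Nonempty) (a t : α) : a - s.min' H ≤ t ↔ ∀ y ∈ s, a - y ≤ t := by
  rw [sub_le_comm, le_min'_iff]
  exact forall₂_congr fun _ _ => sub_le_comm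

lemma min'_le_iff {α : Type*} [LinearOrder α] (s : Finset α) (H : s.Nonempty) (t : α) :
    s.min' H ≤ t ↔ ∃ y ∈ s, y ≤ t :=
  ⟨fun h => ⟨_, min'_mem _ _, h⟩, fun ⟨_, hy, h⟩ => (min'_le _ _ hy).trans h⟩

end Finset

section

open Finset

variable {U : Type*} [DecidableEq U]

def canonicalScenario (lo hi : U → ℝ) (S : Finset U) (e : U) : ℝ :=
  if e ∈ S then hi e else lo e

lemma canonicalScenario_mem_box {lo hi : U → ℝ} (hle : ∀ e, lo e ≤ hi e) (S : Finset U)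
    (e : U) : lo e ≤ canonicalScenario lo hi S e ∧ canonicalScenario lo hi S e ≤ hi e := by
  unfold canonicalScenario
  split_ifs
  exacts [⟨hle e, le_rfl⟩, ⟨le_rfl, hle e⟩]

lemma sum_sub_sum_le_canonicalScenario {lo hi c : U → ℝ} (hc : ∀ e, lo e ≤ c e ∧ c e ≤ hi e)
    (S S' : Finset U) :
    ∑ e ∈ S, c e - ∑ e ∈ S', c e ≤
      ∑ e ∈ S, canonicalScenario lo hi S e - ∑ e ∈ S', canonicalScenario lo hi S e := by
  rw [← sum_sdiff_sub_sum_sdiff (s₁ := S') (s₂ := S) (f := c),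
    ← sum_sdiff_sub_sum_sdiff (s₁ := S') (s₂ := S) (f := canonicalScenario lo hi S)]
  have hS : ∑ e ∈ S \ S', c e ≤ ∑ e ∈ S \ S', canonicalScenario lo hi S e :=
    sum_le_sum fun e he => by
      simpa [canonicalScenario, (mem_sdiff.mp he).1] using (hc e).2
  have hS' : ∑ e ∈ S' \ S, canonicalScenario lo hi S e ≤ ∑ e ∈ S' \ S, c e :=
    sum_le_sum fun e he => by
      simpa [canonicalScenario, (mem_sdiff.mp he).2] using (hc e).1
  linarith

lemma regret_le_canonicalScenario {lo hi c : U → ℝ} (hc : ∀ e, lo e ≤ c e ∧ c e ≤ hi e)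
    (F : Finset (Finset U)) (hF : F.Nonempty) (S : Finset U) :
    ∑ e ∈ S, c e - (F.image fun S' => ∑ e ∈ S', c e).min' (hF.image _) ≤
      ∑ e ∈ S, canonicalScenario lo hi S e -
        (F.image fun S' => ∑ e ∈ S', canonicalScenario lo hi S e).min' (hF.image _) := by
  obtain ⟨S', hS', hmin⟩ := mem_image.mp (min'_mem (F.image fun S' => ∑ e ∈ S', c e) _)
  rw [← hmin]
  have := min'_le (F.image fun S' => ∑ e ∈ S', canonicalScenario lo hi S e) _
    (mem_image_of_mem _ hS')
  linarith [sum_sub_sum_le_canonicalScenario hc S S']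

lemma sSup_regret_eq {lo hi : U → ℝ} (hle : ∀ e, lo e ≤ hi e) (F : Finset (Finset U))
    (hF : F.Nonempty) (S : Finset U) :
    sSup {r : ℝ | ∃ c : U → ℝ, (∀ e, lo e ≤ c e ∧ c e ≤ hi e) ∧
        r = ∑ e ∈ S, c e - (F.image fun S' => ∑ e ∈ S', c e).min' (hF.image _)} =
      ∑ e ∈ S, canonicalScenario lo hi S e -
        (F.image fun S' => ∑ e ∈ S', canonicalScenario lo hi S e).min' (hF.image _) :=
  IsGreatest.csSup_eq
    ⟨⟨_, canonicalScenario_mem_box hle S, rfl⟩,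
      by rintro r ⟨c, hc, rfl⟩; exact regret_le_canonicalScenario hc F hF S⟩

end

theorem interval_minmax_regret_iff_canonical_general {U : Type*} [DecidableEq U]
    (F : Finset (Finset U)) (hF : F.Nonempty)
    (clo chi : U → ℤ) (hle : ∀ e, clo e ≤ chi e) (t : ℤ) :
    (F.image (fun S => sSup {r : ℝ | ∃ c : U → ℝ,
        (∀ e, (clo e : ℝ) ≤ c e ∧ c e ≤ (chi e : ℝ)) ∧
        r = (∑ e ∈ S, c e) -
          (F.image (fun S' => ∑ e ∈ S', c e)).min' (hF.image _)})).min' (hF.image _)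
      ≤ (t : ℝ)
    ↔ ∃ S ∈ F, ∀ S' ∈ F,
        (∑ e ∈ S, ((if e ∈ S then chi e else clo e : ℤ) : ℝ)) -
          (∑ e ∈ S', ((if e ∈ S then chi e else clo e : ℤ) : ℝ)) ≤ (t : ℝ) := by
  have hcast : ∀ S e, ((if e ∈ S then chi e else clo e : ℤ) : ℝ) =
      canonicalScenario (fun e => (clo e : ℝ)) (fun e => (chi e : ℝ)) S e :=
    fun S e => Int.cast_ite _ _ _
  have hle' : ∀ e, (clo e : ℝ) ≤ chi e := fun e => Int.cast_le.mpr (hle e)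
  simp only [hcast, sSup_regret_eq hle' F hF, Finset.min'_le_iff,
    Finset.sub_min'_le_iff, Finset.exists_mem_image, Finset.forall_mem_image]

/-- The interval min-max regret decision problem, reformulated via the canonical
cost scenario: `min_{S∈F} max_{c∈C_I} (c(S) − min_{S'∈F} c(S')) ≤ t` iff there is
`S ∈ F` with `c_S(S) − c_S(S') ≤ t` for all `S' ∈ F`. -/
theorem interval_minmax_regret_iff_canonical {U : Type*} [Fintype U] [DecidableEq U]
    (F : Finset (Finset U)) (hF : F.Nonempty)
    (clo chi : U → ℤ) (hle : ∀ e, clo e ≤ chi e) (t : ℤ) :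
    (F.image (fun S => sSup {r : ℝ | ∃ c : U → ℝ,
        (∀ e, (clo e : ℝ) ≤ c e ∧ c e ≤ (chi e : ℝ)) ∧
        r = (∑ e ∈ S, c e) -
          (F.image (fun S' => ∑ e ∈ S', c e)).min' (hF.image _)})).min' (hF.image _)
      ≤ (t : ℝ)
    ↔ ∃ S ∈ F, ∀ S' ∈ F,
        (∑ e ∈ S, ((if e ∈ S then chi e else clo e : ℤ) : ℝ)) -
          (∑ e ∈ S', ((if e ∈ S then chi e else clo e : ℤ) : ℝ)) ≤ (t : ℝ) :=
  interval_minmax_regret_iff_canonical_general F hF clo chi hle t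
end

section
/- Let f : U → U' be injective, S ⊆ 𝒫(U) and S' ⊆ 𝒫(U') families of subsets with the solution-preserving property {f(S) : S ∈ S} = {T ∩ f(U) : T ∈ S'}, and let B ⊆ U. Then for every B' ⊆ f(B): the set B' intersects every member of S' if and only if f⁻¹(B') intersects every member of S. Moreover |f⁻¹(B')| = |B'|. -/
open Set

def IsBlocker {α : Type*} (B : Set α) (S : Set (Set α)) : Prop :=
  ∀ T ∈ S, (B ∩ T).Nonempty

section

variable {α β : Type*}

theorem isBlocker_image_image_iff (f : α → β) (B : Set β) (S : Set (Set α)) :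
    IsBlocker B {f '' A | A ∈ S} ↔ IsBlocker (f ⁻¹' B) S := by
  refine forall_mem_image.trans (forall₂_congr fun A _ => ?_)
  rw [inter_comm, image_inter_nonempty_iff, inter_comm]

theorem isBlocker_inter_iff_of_subset {B R : Set α} (S : Set (Set α)) (hB : B ⊆ R) :
    IsBlocker B {T ∩ R | T ∈ S} ↔ IsBlocker B S := by
  refine forall_mem_image.trans (forall₂_congr fun T _ => ?_)
  rw [← inter_assoc, inter_right_comm, inter_eq_left.mpr hB]

end

/-- Blockers contained in the image of the embedded universe transfer along a
solution-preserving reduction, with preserved cardinality. -/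
theorem blocker_transfer {U U' : Type*} (f : U → U') (hf : Function.Injective f)
    (S : Set (Set U)) (S' : Set (Set U'))
    (hssp : {f '' A | A ∈ S} = {T ∩ Set.range f | T ∈ S'})
    (B : Set U) (B' : Set U') (hB' : B' ⊆ f '' B) :
    ((∀ T ∈ S', (B' ∩ T).Nonempty) ↔ (∀ A ∈ S, ((f ⁻¹' B') ∩ A).Nonempty)) ∧
      (f ⁻¹' B').ncard = B'.ncard := by
  have hrange : B' ⊆ range f := hB'.trans (image_subset_range f B)
  refine ⟨?_, ncard_preimage_of_injective_subset_range hf hrange⟩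
  calc IsBlocker B' S'
      ↔ IsBlocker B' {T ∩ range f | T ∈ S'} := (isBlocker_inter_iff_of_subset S' hrange).symm
    _ ↔ IsBlocker B' {f '' A | A ∈ S} := by rw [hssp]
    _ ↔ IsBlocker (f ⁻¹' B') S := isBlocker_image_image_iff f B' S
end

section
/- Let U, U' be finite sets, f : U → U' injective, and S ⊆ 𝒫(U), S' ⊆ 𝒫(U') nonempty families with the solution-preserving property {f(S) : S ∈ S} = {T ∩ f(U) : T ∈ S'}. Let h̲, h̄ : U → ℤ with h̲ ≤ h̄ pointwise, and define h̲', h̄' : U' → ℤ by h̲'(f(u)) = h̲(u), h̄'(f(u)) = h̄(u) for u ∈ U, and h̲'(e) = h̄'(e) = 0 for e ∉ f(U). Let H and H' be the corresponding interval uncertainty sets on U and U'. Then min_{S∈S} max_{c∈H} ( c(S) − min_{S''∈S} c(S'') ) = min_{T∈S'} max_{c'∈H'} ( c'(T) − min_{T''∈S'} c'(T'') ). -/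
/-!
A cost scenario `c'` in the extended interval set vanishes off `f(U)`, so the cost of a
solution `T` only depends on `T ∩ f(U)`, and all of `c'`'s sums are sums of `c' ∘ f` over the
corresponding solutions in `U`. Moreover `c' ↦ c' ∘ f` maps the extended interval set onto the
original one. Hence corresponding solutions `S`, `T` (with `T ∩ f(U) = f(S)`) have the same
set of regrets, and solution-preservation matches up the two outer minimisations.
-/

open Finset Function

lemma Finset.image_eq_image_of_image_eq {α β γ δ : Type*} [DecidableEq γ] [DecidableEq δ]
    {s : Finset α} {t : Finset β} {p : α → δ} {q : β → δ} {g : α → γ} {h : β → γ}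
    (hpq : s.image p = t.image q) (hgh : ∀ a ∈ s, ∀ b ∈ t, p a = q b → g a = h b) :
    s.image g = t.image h := by
  ext x
  simp only [mem_image]
  constructor
  · rintro ⟨a, ha, rfl⟩
    obtain ⟨b, hb, hba⟩ := mem_image.1 (hpq ▸ mem_image_of_mem p ha)
    exact ⟨b, hb, (hgh a ha b hb hba.symm).symm⟩
  · rintro ⟨b, hb, rfl⟩
    obtain ⟨a, ha, hab⟩ := mem_image.1 (hpq.symm ▸ mem_image_of_mem q hb)
    exact ⟨a, ha, hgh a ha b hb hab⟩

section Embedding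

variable {U U' M : Type*} [Fintype U] [DecidableEq U'] [AddCommMonoid M] {f : U → U'}

lemma sum_inter_image_univ (T : Finset U') {c : U' → M} (hc : ∀ e ∉ Set.range f, c e = 0) :
    ∑ e ∈ T ∩ univ.image f, c e = ∑ e ∈ T, c e :=
  sum_subset inter_subset_left fun e heT he =>
    hc e fun ⟨u, hu⟩ => he (mem_inter.2 ⟨heT, mem_image.2 ⟨u, mem_univ u, hu⟩⟩)

lemma sum_eq_sum_comp_of_inter_image_univ_eq (hf : Injective f) {S : Finset U} {T : Finset U'}
    (hST : T ∩ univ.image f = S.image f) {c : U' → M} (hc : ∀ e ∉ Set.range f, c e = 0) :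
    ∑ e ∈ T, c e = ∑ u ∈ S, c (f u) := by
  rw [← sum_inter_image_univ T hc, hST, sum_image hf.injOn]

lemma image_sum_eq_image_sum_comp [DecidableEq M] (hf : Injective f)
    {S1 : Finset (Finset U)} {S2 : Finset (Finset U')}
    (hssp : S1.image (fun S => S.image f) = S2.image (fun T => T ∩ univ.image f))
    {c : U' → M} (hc : ∀ e ∉ Set.range f, c e = 0) :
    S2.image (fun T => ∑ e ∈ T, c e) = S1.image (fun S => ∑ u ∈ S, c (f u)) :=
  (image_eq_image_of_image_eq hssp fun _ _ _ _ hST =>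
    (sum_eq_sum_comp_of_inter_image_univ_eq hf hST.symm hc).symm).symm

end Embedding

section Interval

variable {U U' R : Type*} [PartialOrder R] [Zero R] {f : U → U'} {lo hi : U → R} {lo' hi' : U' → R}

lemma eq_zero_of_notMem_range {c : U' → R} (hc : ∀ e, lo' e ≤ c e ∧ c e ≤ hi' e)
    (hout : ∀ e, e ∉ Set.range f → lo' e = 0 ∧ hi' e = 0) (e : U') (he : e ∉ Set.range f) :
    c e = 0 := by
  obtain ⟨hlo, hhi⟩ := hout e he
  exact le_antisymm (hhi ▸ (hc e).2) (hlo ▸ (hc e).1)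

lemma exists_interval_comp_iff (hf : Injective f)
    (hlo : ∀ u, lo' (f u) = lo u) (hhi : ∀ u, hi' (f u) = hi u)
    (hout : ∀ e, e ∉ Set.range f → lo' e = 0 ∧ hi' e = 0) (P : (U → R) → Prop) :
    (∃ c' : U' → R, (∀ e, lo' e ≤ c' e ∧ c' e ≤ hi' e) ∧ P (c' ∘ f)) ↔
      ∃ c : U → R, (∀ u, lo u ≤ c u ∧ c u ≤ hi u) ∧ P c := by
  constructor
  · rintro ⟨c', hc', hP⟩
    exact ⟨c' ∘ f, fun u => hlo u ▸ hhi u ▸ hc' (f u), hP⟩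
  · rintro ⟨c, hc, hP⟩
    refine ⟨extend f c 0, fun e => ?_, by rwa [extend_comp hf]⟩
    by_cases he : e ∈ Set.range f
    · obtain ⟨u, rfl⟩ := he
      rw [hf.extend_apply, hlo, hhi]
      exact hc u
    · rw [extend_apply' _ _ _ fun ⟨u, hu⟩ => he ⟨u, hu⟩, (hout e he).1, (hout e he).2]
      exact ⟨le_rfl, le_rfl⟩

end Interval

theorem regret_invariance_general {U U' : Type*} [Fintype U]
    [DecidableEq U']
    (f : U → U') (hf : Function.Injective f)
    (S1 : Finset (Finset U)) (S2 : Finset (Finset U'))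
    (hS1 : S1.Nonempty) (hS2 : S2.Nonempty)
    (hssp : S1.image (fun S => S.image f)
          = S2.image (fun T => T ∩ Finset.univ.image f))
    (hlo hhi : U → ℤ)
    (hlo' hhi' : U' → ℤ)
    (hlo'f : ∀ u, hlo' (f u) = hlo u) (hhi'f : ∀ u, hhi' (f u) = hhi u)
    (hout : ∀ e, e ∉ Set.range f → hlo' e = 0 ∧ hhi' e = 0) :
    (S1.image (fun S => sSup {r : ℝ | ∃ c : U → ℝ,
        (∀ e, (hlo e : ℝ) ≤ c e ∧ c e ≤ (hhi e : ℝ)) ∧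
        r = (∑ e ∈ S, c e) -
          (S1.image (fun S'' => ∑ e ∈ S'', c e)).min' (hS1.image _)})).min' (hS1.image _)
    = (S2.image (fun T => sSup {r : ℝ | ∃ c : U' → ℝ,
        (∀ e, (hlo' e : ℝ) ≤ c e ∧ c e ≤ (hhi' e : ℝ)) ∧
        r = (∑ e ∈ T, c e) -
          (S2.image (fun T'' => ∑ e ∈ T'', c e)).min' (hS2.image _)})).min' (hS2.image _) := by
  have hout' : ∀ e, e ∉ Set.range f → (hlo' e : ℝ) = 0 ∧ (hhi' e : ℝ) = 0 := fun e he => by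
    simp [hout e he]
  congr 1
  refine image_eq_image_of_image_eq hssp fun S _ T _ hST => congrArg sSup (Set.ext fun r => ?_)
  refine (exists_interval_comp_iff hf (fun u => by rw [hlo'f]) (fun u => by rw [hhi'f])
    hout' _).symm.trans (exists_congr fun c => and_congr_right fun hc => ?_)
  have hc0 := eq_zero_of_notMem_range hc hout'
  simp only [sum_eq_sum_comp_of_inter_image_univ_eq hf hST.symm hc0,
    image_sum_eq_image_sum_comp hf hssp hc0]
  rfl

/-- Regret invariance: a solution-preserving embedding (costs extended by zeros
outside the image) leaves the interval min-max regret value unchanged. -/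
theorem regret_invariance {U U' : Type*} [Fintype U] [Fintype U']
    [DecidableEq U] [DecidableEq U']
    (f : U → U') (hf : Function.Injective f)
    (S1 : Finset (Finset U)) (S2 : Finset (Finset U'))
    (hS1 : S1.Nonempty) (hS2 : S2.Nonempty)
    (hssp : S1.image (fun S => S.image f)
          = S2.image (fun T => T ∩ Finset.univ.image f))
    (hlo hhi : U → ℤ) (hle : ∀ e, hlo e ≤ hhi e)
    (hlo' hhi' : U' → ℤ)
    (hlo'f : ∀ u, hlo' (f u) = hlo u) (hhi'f : ∀ u, hhi' (f u) = hhi u)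
    (hout : ∀ e, e ∉ Set.range f → hlo' e = 0 ∧ hhi' e = 0) :
    (S1.image (fun S => sSup {r : ℝ | ∃ c : U → ℝ,
        (∀ e, (hlo e : ℝ) ≤ c e ∧ c e ≤ (hhi e : ℝ)) ∧
        r = (∑ e ∈ S, c e) -
          (S1.image (fun S'' => ∑ e ∈ S'', c e)).min' (hS1.image _)})).min' (hS1.image _)
    = (S2.image (fun T => sSup {r : ℝ | ∃ c : U' → ℝ,
        (∀ e, (hlo' e : ℝ) ≤ c e ∧ c e ≤ (hhi' e : ℝ)) ∧
        r = (∑ e ∈ T, c e) -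
          (S2.image (fun T'' => ∑ e ∈ T'', c e)).min' (hS2.image _)})).min' (hS2.image _) :=
  regret_invariance_general f hf S1 S2 hS1 hS2 hssp hlo hhi hlo' hhi' hlo'f hhi'f hout
end

section
/- Let a₁, …, aₙ be natural numbers with total sum A := Σᵢ aᵢ, and let M ≤ A be a natural number. Define b := M + 1 and b' := A + 1 − M. Then there exists a subset S ⊆ {1, …, n} with Σ_{i∈S} aᵢ = M if and only if there exists a subset T of the multiset {a₁, …, aₙ, b, b'} containing b' (and not b) such that the sum of T equals the sum of its complement (both equal to A + 1). -/
/-!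
A part containing `b'` but not `b` is `S ⊕ {b'}` for a set `S` of indices, and it balances its
complement `Sᶜ ⊕ {b}` iff `∑_S a + (A + 1 - M) = ∑_{Sᶜ} a + (M + 1)`. Since
`∑_S a + ∑_{Sᶜ} a = A`, this says exactly `∑_S a = M`.
-/

namespace Finset

variable {ι κ : Type*}

lemma compl_disjSum [Fintype ι] [Fintype κ] [DecidableEq ι] [DecidableEq κ]
    (s : Finset ι) (t : Finset κ) : (s.disjSum t)ᶜ = sᶜ.disjSum tᶜ := by
  ext (x | x) <;> simp

lemma eq_toLeft_disjSum_singleton_true {T : Finset (ι ⊕ Bool)}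
    (htrue : Sum.inr true ∈ T) (hfalse : Sum.inr false ∉ T) :
    T = T.toLeft.disjSum {true} := by
  refine eq_disjSum_iff.mpr ⟨rfl, ?_⟩
  ext (_ | _) <;> simp [htrue, hfalse]

end Finset

open Finset

theorem exists_balanced_split_iff {ι M : Type*} [Fintype ι] [DecidableEq ι] [AddCommMonoid M]
    (a : ι → M) (f : Bool → M) :
    (∃ T : Finset (ι ⊕ Bool), Sum.inr true ∈ T ∧ Sum.inr false ∉ T ∧
        ∑ x ∈ T, Sum.elim a f x = ∑ x ∈ Tᶜ, Sum.elim a f x) ↔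
      ∃ S : Finset ι, ∑ i ∈ S, a i + f true = ∑ i ∈ Sᶜ, a i + f false := by
  have hsplit (S : Finset ι) :
      ∑ x ∈ S.disjSum {true}, Sum.elim a f x = ∑ x ∈ (S.disjSum {true})ᶜ, Sum.elim a f x ↔
        ∑ i ∈ S, a i + f true = ∑ i ∈ Sᶜ, a i + f false := by
    rw [compl_disjSum, sum_sumElim, sum_sumElim,
      show ({true} : Finset Bool)ᶜ = {false} by decide]
    simp only [sum_singleton]
  constructor
  · rintro ⟨T, htrue, hfalse, hT⟩
    rw [eq_toLeft_disjSum_singleton_true htrue hfalse, hsplit] at hT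
    exact ⟨_, hT⟩
  · rintro ⟨S, hS⟩
    exact ⟨S.disjSum {true}, by simp, by simp, (hsplit S).mpr hS⟩

theorem subset_sum_iff_partition_general (n : ℕ) (a : Fin n → ℕ) (M : ℕ) :
    (∃ S : Finset (Fin n), ∑ i ∈ S, a i = M) ↔
      (∃ T : Finset (Fin n ⊕ Bool),
        Sum.inr true ∈ T ∧ Sum.inr false ∉ T ∧
        (∑ i ∈ T, Sum.elim a (fun b => if b then (∑ i, a i) + 1 - M else M + 1) i)
          = ∑ i ∈ Tᶜ, Sum.elim a (fun b => if b then (∑ i, a i) + 1 - M else M + 1) i) := by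
  rw [exists_balanced_split_iff]
  refine exists_congr fun S => ?_
  have hcompl := sum_add_sum_compl S a
  -- if `M > A + 1` the truncated `A + 1 - M` is `0` and the right side would force `2 ∑_S a > 2A`
  show _ ↔ ∑ i ∈ S, a i + (∑ i, a i + 1 - M) = ∑ i ∈ Sᶜ, a i + (M + 1)
  omega

/-- Correctness of the Subset Sum → Partition reduction: with `b = M+1` and
`b' = A+1−M` added to the numbers `a₁,…,aₙ` (encoded by `Sum.inr false` and
`Sum.inr true` respectively), `M` is attainable as a subset sum iff there is a
partition part containing `b'` but not `b` whose sum equals the sum of its complement. -/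
theorem subset_sum_iff_partition (n : ℕ) (a : Fin n → ℕ) (M : ℕ)
    (hM : M ≤ ∑ i, a i) :
    (∃ S : Finset (Fin n), ∑ i ∈ S, a i = M) ↔
      (∃ T : Finset (Fin n ⊕ Bool),
        Sum.inr true ∈ T ∧ Sum.inr false ∉ T ∧
        (∑ i ∈ T, Sum.elim a (fun b => if b then (∑ i, a i) + 1 - M else M + 1) i)
          = ∑ i ∈ Tᶜ, Sum.elim a (fun b => if b then (∑ i, a i) + 1 - M else M + 1) i) :=
  subset_sum_iff_partition_general n a M
end

section
/- Let G = (V, E) be a finite simple graph and k ≤ |V| a natural number. Set J := V (facilities), I := E (clients), open facility costs f(v) = 1 for all v, and service costs c(e, v) = 0 if v ∈ e and c(e, v) = |V| + 1 otherwise. Then a nonempty set J' ⊆ V satisfies Σ_{v∈J'} f(v) + Σ_{e∈E} min_{v∈J'} c(e, v) ≤ k if and only if J' is a vertex cover of G with |J'| ≤ k. -/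
/-!
The cheapest way to serve an edge is `0` if it has an endpoint in `J'` and `|V| + 1` otherwise.
Since `k ≤ |V| < |V| + 1`, one uncovered edge already exceeds the budget, so a facility set within
budget covers every edge and then costs exactly `|J'|`.
-/

open Finset

lemma Finset.min'_image_ite_zero {α : Type*} (s : Finset α) (hs : s.Nonempty) (p : α → Prop)
    [DecidablePred p] (M : ℕ) :
    (s.image fun a => if p a then 0 else M).min' (hs.image _) = if ∃ a ∈ s, p a then 0 else M := by
  refine le_antisymm ?_ ?_
  · split_ifs with h
    · obtain ⟨a, ha, hpa⟩ := h
      exact (min'_le _ _ (mem_image_of_mem _ ha)).trans_eq (if_pos hpa)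
    · obtain ⟨a, ha⟩ := hs
      exact (min'_le _ _ (mem_image_of_mem _ ha)).trans_eq (if_neg fun hpa => h ⟨a, ha, hpa⟩)
  · split_ifs with h
    · exact Nat.zero_le _
    · refine le_min' _ _ _ fun m hm => ?_
      obtain ⟨a, ha, rfl⟩ := mem_image.1 hm
      rw [if_neg fun hpa => h ⟨a, ha, hpa⟩]

lemma add_sum_ite_zero_le_iff {ι : Type*} (s : Finset ι) (p : ι → Prop) [DecidablePred p]
    {a k M : ℕ} (hkM : k < M) :
    a + ∑ i ∈ s, (if p i then 0 else M) ≤ k ↔ (∀ i ∈ s, p i) ∧ a ≤ k := by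
  by_cases hp : ∀ i ∈ s, p i
  · rw [sum_eq_zero fun i hi => if_pos (hp i hi), add_zero]
    exact ⟨fun h => ⟨hp, h⟩, And.right⟩
  · push Not at hp
    obtain ⟨i, hi, hpi⟩ := hp
    have hM : M ≤ ∑ i ∈ s, (if p i then 0 else M) := by
      simpa [hpi] using single_le_sum (f := fun i => if p i then 0 else M) (by simp) hi
    exact iff_of_false (by omega) fun h => hpi (h.1 i hi)

theorem SimpleGraph.isVertexCover_iff_forall_edge {V : Type*} {G : SimpleGraph V} {c : Set V} :
    G.IsVertexCover c ↔ ∀ e ∈ G.edgeSet, ∃ v ∈ c, v ∈ e := by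
  refine ⟨fun h e he => ?_, fun h v w hvw => ?_⟩
  · induction e using Sym2.ind with
    | _ v w =>
      rcases h he with hv | hw
      · exact ⟨v, hv, Sym2.mem_mk_left v w⟩
      · exact ⟨w, hw, Sym2.mem_mk_right v w⟩
  · obtain ⟨u, hu, hue⟩ := h s(v, w) hvw
    rcases Sym2.mem_iff.1 hue with rfl | rfl
    exacts [Or.inl hu, Or.inr hu]

/-- Correctness of the Vertex Cover → Uncapacitated Facility Location reduction:
with unit opening costs and service cost `0` for incident edges and `|V| + 1`
otherwise, a nonempty facility set has total cost `≤ k` iff it is a vertex cover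
of size `≤ k` (for `k ≤ |V|`). -/
theorem vc_to_ufl_correct {V : Type*} [Fintype V] [DecidableEq V]
    (G : SimpleGraph V) [DecidableRel G.Adj]
    (k : ℕ) (hk : k ≤ Fintype.card V)
    (J' : Finset V) (hJ : J'.Nonempty) :
    ((∑ v ∈ J', 1) +
        ∑ e ∈ G.edgeFinset,
          (J'.image (fun v => if v ∈ e then (0 : ℕ) else Fintype.card V + 1)).min'
            (hJ.image _) ≤ k)
      ↔ ((∀ a b, G.Adj a b → a ∈ J' ∨ b ∈ J') ∧ J'.card ≤ k) := by
  rw [sum_congr rfl fun e _ => J'.min'_image_ite_zero hJ (· ∈ e) _, ← card_eq_sum_ones,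
    add_sum_ite_zero_le_iff _ _ (Nat.lt_succ_of_le hk)]
  have hcover := G.isVertexCover_iff_forall_edge (c := J')
  simp only [SimpleGraph.mem_edgeFinset, mem_coe] at hcover ⊢
  exact and_congr_left' hcover.symm
end
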